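/- arXiv:0704.1139 — 2 statements merged into one kernel-verified Lean document; each statement's English description precedes it below -/
import Mathlib

section
/- Let M ⊂ {1,…,p} with |M| = m and suppose D ⊄ M, where D is the support of β with min_{j∈D}|β_j| = ψ. Let β̂_M be the least-squares estimator on M (extended by zeros). Then L(β̂_M) = n⁻¹(β̂_M − β)ᵀ Xᵀ X(β̂_M − β) ≥ φ_n(m+s) · ψ², where s = |D| and φ_n(k) is the minimal smallest eigenvalue of n⁻¹ X_Aᵀ X_A over all subsets A of size k ≥ |supp(β̂_M) ∪ D|. -/
open Matrix

/-- The smallest eigenvalue of a real symmetric matrix (junk value `0` if not symmetric). -/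
noncomputable def lamMin {m : Type*} [Fintype m] [DecidableEq m] (B : Matrix m m ℝ) : ℝ :=
  if h : B.IsHermitian then ⨅ j, h.eigenvalues j else 0

/-- `φₙ(k)`: the minimum over all subsets `A` of size `k` of the smallest eigenvalue of
`n⁻¹ X_Aᵀ X_A`. -/
noncomputable def phiN {n p : ℕ} (X : Matrix (Fin n) (Fin p) ℝ) (k : ℕ) : ℝ :=
  ⨅ A : {A : Finset (Fin p) // A.card = k},
    lamMin ((n : ℝ)⁻¹ • ((Matrix.of fun i (j : {j // j ∈ A.1}) => X i j.1)ᵀ *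
      (Matrix.of fun i (j : {j // j ∈ A.1}) => X i j.1)))

/-!
The error `v = β̂_M − β` vanishes off `M ∪ D`, a set of at most `m + s` indices, so the
quadratic form `n⁻¹ vᵀ Xᵀ X v` only sees the columns of `X` in some `A ⊇ M ∪ D` of size
exactly `m + s`, and is therefore at least `φₙ(m+s) ‖v‖²`. Since `D ⊄ M`, some `j ∈ D \ M`
has `v_j = −β_j`, whence `‖v‖² ≥ ψ²`.
-/

theorem posSemidef_smul_transpose_mul_self {ι κ : Type*} [Fintype ι] [Fintype κ]
    (G : Matrix κ ι ℝ) {c : ℝ} (hc : 0 ≤ c) : (c • (Gᵀ * G)).PosSemidef := by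
  simpa only [conjTranspose_eq_transpose_of_trivial] using
    (posSemidef_conjTranspose_mul_self G).smul hc

section Eigenvalue

variable {ι : Type*} [Fintype ι] [DecidableEq ι]

open scoped MatrixOrder in
theorem lamMin_mul_dotProduct_self_le {B : Matrix ι ι ℝ} (hB : B.IsHermitian) (x : ι → ℝ) :
    lamMin B * (x ⬝ᵥ x) ≤ x ⬝ᵥ B *ᵥ x := by
  rw [lamMin, dif_pos hB]
  have hle : algebraMap ℝ (Matrix ι ι ℝ) (⨅ j, hB.eigenvalues j) ≤ B := by
    rw [algebraMap_le_iff_le_spectrum hB.isSelfAdjoint, hB.spectrum_real_eq_range_eigenvalues]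
    rintro _ ⟨j, rfl⟩
    exact ciInf_le (Finite.bddBelow_range _) j
  have := (Matrix.le_iff.mp hle).dotProduct_mulVec_nonneg x
  simpa [sub_mulVec, Algebra.algebraMap_eq_smul_one, smul_mulVec, dotProduct_sub] using this

theorem lamMin_nonneg {B : Matrix ι ι ℝ} (hB : B.PosSemidef) : 0 ≤ lamMin B := by
  rw [lamMin, dif_pos hB.isHermitian]
  exact Real.iInf_nonneg hB.eigenvalues_nonneg

end Eigenvalue

section Restrict

variable {κ : Type*} [Fintype κ] {A : Finset κ}

theorem dotProduct_restrict_eq {u v : κ → ℝ} (hv : ∀ j ∉ A, v j = 0) :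
    (fun j : A => u j) ⬝ᵥ (fun j : A => v j) = u ⬝ᵥ v := by
  rw [dotProduct, dotProduct, Finset.sum_coe_sort A (fun j => u j * v j)]
  exact Finset.sum_subset (Finset.subset_univ A) fun j _ hj => by rw [hv j hj, mul_zero]

theorem mulVec_restrict_eq {ι : Type*} (X : Matrix ι κ ℝ) {v : κ → ℝ}
    (hv : ∀ j ∉ A, v j = 0) :
    (Matrix.of fun i (j : A) => X i j.1) *ᵥ (fun j : A => v j) = X *ᵥ v :=
  funext fun _ => dotProduct_restrict_eq hv

end Restrict

section PhiN

variable {n p : ℕ} (X : Matrix (Fin n) (Fin p) ℝ)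

theorem phiN_nonneg (k : ℕ) : 0 ≤ phiN X k :=
  Real.iInf_nonneg fun _ =>
    lamMin_nonneg (posSemidef_smul_transpose_mul_self _ (by positivity))

theorem phiN_le_lamMin {A : Finset (Fin p)} {k : ℕ} (hA : A.card = k) :
    phiN X k ≤ lamMin ((n : ℝ)⁻¹ • ((Matrix.of fun i (j : A) => X i j.1)ᵀ *
      (Matrix.of fun i (j : A) => X i j.1))) :=
  ciInf_le ⟨0, Set.forall_mem_range.2 fun _ =>
    lamMin_nonneg (posSemidef_smul_transpose_mul_self _ (by positivity))⟩
    (⟨A, hA⟩ : {A : Finset (Fin p) // A.card = k})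

theorem phiN_mul_dotProduct_self_le_of_card_eq {A : Finset (Fin p)} {k : ℕ} (hA : A.card = k)
    {v : Fin p → ℝ} (hv : ∀ j ∉ A, v j = 0) :
    phiN X k * (v ⬝ᵥ v) ≤ (n : ℝ)⁻¹ * (v ⬝ᵥ (Xᵀ * X) *ᵥ v) := by
  set XA := Matrix.of fun i (j : A) => X i j.1
  set vA := fun j : A => v j
  have hform : v ⬝ᵥ (Xᵀ * X) *ᵥ v = (X *ᵥ v) ⬝ᵥ (X *ᵥ v) := by
    rw [← mulVec_mulVec, dotProduct_mulVec, vecMul_transpose]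
  have hformA : vA ⬝ᵥ (XAᵀ * XA) *ᵥ vA = (X *ᵥ v) ⬝ᵥ (X *ᵥ v) := by
    rw [← mulVec_mulVec, dotProduct_mulVec, vecMul_transpose, mulVec_restrict_eq X hv]
  calc phiN X k * (v ⬝ᵥ v)
      = phiN X k * (vA ⬝ᵥ vA) := by rw [dotProduct_restrict_eq hv]
    _ ≤ lamMin ((n : ℝ)⁻¹ • (XAᵀ * XA)) * (vA ⬝ᵥ vA) :=
        mul_le_mul_of_nonneg_right (phiN_le_lamMin X hA) (dotProduct_self_star_nonneg vA)
    _ ≤ vA ⬝ᵥ ((n : ℝ)⁻¹ • (XAᵀ * XA)) *ᵥ vA :=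
        lamMin_mul_dotProduct_self_le
          (posSemidef_smul_transpose_mul_self XA (by positivity)).isHermitian vA
    _ = (n : ℝ)⁻¹ * (v ⬝ᵥ (Xᵀ * X) *ᵥ v) := by
        rw [smul_mulVec, dotProduct_smul, smul_eq_mul, hformA, hform]

theorem phiN_mul_dotProduct_self_le {A : Finset (Fin p)} {k : ℕ} (hAk : A.card ≤ k)
    (hkp : k ≤ p) {v : Fin p → ℝ} (hv : ∀ j ∉ A, v j = 0) :
    phiN X k * (v ⬝ᵥ v) ≤ (n : ℝ)⁻¹ * (v ⬝ᵥ (Xᵀ * X) *ᵥ v) := by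
  obtain ⟨A', hAA', hA'⟩ := Finset.exists_superset_card_eq hAk (by simpa using hkp)
  exact phiN_mul_dotProduct_self_le_of_card_eq X hA' fun j hj => hv j fun h => hj (hAA' h)

end PhiN

theorem sq_le_dotProduct_self {κ : Type*} [Fintype κ] {v : κ → ℝ} {ψ : ℝ} (hψ : 0 ≤ ψ)
    {j : κ} (hj : ψ ≤ |v j|) : ψ ^ 2 ≤ v ⬝ᵥ v :=
  calc ψ ^ 2 ≤ v j * v j := by nlinarith [abs_mul_abs_self (v j)]
    _ ≤ v ⬝ᵥ v :=
        Finset.single_le_sum (fun i _ => mul_self_nonneg (v i)) (Finset.mem_univ j)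

theorem stmt5_general (n p : ℕ)
    (X : Matrix (Fin n) (Fin p) ℝ) (β : Fin p → ℝ)
    (D : Finset (Fin p)) (hD : ∀ j, j ∈ D ↔ β j ≠ 0)
    (m s : ℕ) (M : Finset (Fin p)) (hm : M.card = m) (hs : D.card = s)
    (hmp : m + s ≤ p)
    (hnotsub : ¬ D ⊆ M)
    (ψ : ℝ) (hψpos : 0 < ψ) (hψ : ∀ j ∈ D, ψ ≤ |β j|)
    (bM : {j // j ∈ M} → ℝ)
    (b : Fin p → ℝ) (hb : ∀ j : Fin p, b j = if h : j ∈ M then bM ⟨j, h⟩ else 0) :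
    phiN X (m + s) * ψ ^ 2 ≤
      (n : ℝ)⁻¹ * ((b - β) ⬝ᵥ ((Xᵀ * X).mulVec (b - β))) := by
  have hb0 : ∀ j ∉ M, b j = 0 := fun j hj => by rw [hb j, dif_neg hj]
  have hsupp : ∀ j ∉ M ∪ D, (b - β) j = 0 := fun j hj => by
    rw [Finset.mem_union, not_or, hD, not_not] at hj
    rw [Pi.sub_apply, hb0 j hj.1, hj.2, sub_zero]
  have hcard : (M ∪ D).card ≤ m + s := hm ▸ hs ▸ Finset.card_union_le M D
  obtain ⟨j₀, hj₀D, hj₀M⟩ := Finset.not_subset.mp hnotsub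
  have hψj₀ : ψ ≤ |(b - β) j₀| := by
    rw [Pi.sub_apply, hb0 j₀ hj₀M, zero_sub, abs_neg]
    exact hψ j₀ hj₀D
  calc phiN X (m + s) * ψ ^ 2
      ≤ phiN X (m + s) * ((b - β) ⬝ᵥ (b - β)) :=
        mul_le_mul_of_nonneg_left (sq_le_dotProduct_self hψpos.le hψj₀) (phiN_nonneg X _)
    _ ≤ _ := phiN_mul_dotProduct_self_le X hcard hmp hsupp

/-- If `M` has size `m` and does not contain the support `D` of `β` (with `|D| = s` and
`min_{j∈D} |β_j| = ψ > 0`), then the least-squares estimator `β̂_M` on `M` (extended by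
zeros) satisfies `L(β̂_M) = n⁻¹ (β̂_M − β)ᵀ Xᵀ X (β̂_M − β) ≥ φₙ(m+s) ψ²`. -/
theorem stmt5 (n p : ℕ) (hn : 0 < n)
    (X : Matrix (Fin n) (Fin p) ℝ) (β : Fin p → ℝ) (ε Y : Fin n → ℝ)
    (hY : Y = X.mulVec β + ε)
    (D : Finset (Fin p)) (hD : ∀ j, j ∈ D ↔ β j ≠ 0)
    (m s : ℕ) (M : Finset (Fin p)) (hm : M.card = m) (hs : D.card = s)
    (hmp : m + s ≤ p)
    (hnotsub : ¬ D ⊆ M)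
    (ψ : ℝ) (hψpos : 0 < ψ) (hψ : ∀ j ∈ D, ψ ≤ |β j|)
    (Xm : Matrix (Fin n) {j // j ∈ M} ℝ) (hXm : Xm = Matrix.of fun i j => X i j.1)
    (hG : IsUnit (Xmᵀ * Xm).det)
    (bM : {j // j ∈ M} → ℝ) (hbM : bM = ((Xmᵀ * Xm)⁻¹).mulVec (Xmᵀ.mulVec Y))
    (b : Fin p → ℝ) (hb : ∀ j : Fin p, b j = if h : j ∈ M then bM ⟨j, h⟩ else 0) :
    phiN X (m + s) * ψ ^ 2 ≤
      (n : ℝ)⁻¹ * ((b - β) ⬝ᵥ ((Xᵀ * X).mulVec (b - β))) :=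
  stmt5_general n p X β D hD m s M hm hs hmp hnotsub ψ hψpos hψ bM b hb
end

section
/- Let R(b) = τ² + bᵀΣb − 2bᵀρ with Σ positive semidefinite, and h(ℓ) = min_{‖b‖₁ ≤ ℓ} R(b). Fix Ω > 0 and suppose C = max{max_j |ρ_j|, max_{j,k} |Σ_{jk}|}. Then for all 0 ≤ ℓ and δ > 0 with ℓ + δ ≤ Ω, 0 ≤ h(ℓ) − h(ℓ+δ) ≤ 2δC + δ(2Ω + δ)C·Ω², i.e., h is locally Lipschitz on [0, Ω] with constant depending only on C and Ω. -/
/-!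
Shrinking a feasible point `b` of the radius-`(ℓ + δ)` ball by the factor `t = ℓ / (ℓ + δ)` makes
it feasible for the radius-`ℓ` ball. Since `Σ` is positive semidefinite and `t ≤ 1`, the quadratic
part of the risk can only decrease, while the linear part changes by at most
`2 (1 - t) C ‖b‖₁ ≤ 2 δ C`. Hence `h ℓ - h (ℓ + δ) ≤ 2 δ C`; the `Ω`-dependent term is slack.
-/

open Matrix

variable {ι : Type*} [Fintype ι]

def l1Ball (r : ℝ) : Set (ι → ℝ) := {b | ∑ j, |b j| ≤ r}

@[simp]
lemma mem_l1Ball {r : ℝ} {b : ι → ℝ} : b ∈ l1Ball r ↔ ∑ j, |b j| ≤ r := Iff.rfl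

lemma zero_mem_l1Ball {r : ℝ} (hr : 0 ≤ r) : (0 : ι → ℝ) ∈ l1Ball r := by
  simpa using hr

lemma l1Ball_mono : Monotone (l1Ball (ι := ι)) :=
  fun _ _ hrs _ hb => le_trans hb hrs

lemma smul_mem_l1Ball {t r : ℝ} {b : ι → ℝ} (ht : 0 ≤ t) (hb : b ∈ l1Ball r) :
    t • b ∈ l1Ball (t * r) := by
  simp only [mem_l1Ball, Pi.smul_apply, smul_eq_mul, abs_mul, abs_of_nonneg ht,
    ← Finset.mul_sum] at hb ⊢
  exact mul_le_mul_of_nonneg_left hb ht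

lemma dotProduct_le_mul_sum_abs {b v : ι → ℝ} {C : ℝ} (hv : ∀ j, |v j| ≤ C) :
    b ⬝ᵥ v ≤ C * ∑ j, |b j| :=
  calc b ⬝ᵥ v ≤ ∑ j, |b j * v j| := (le_abs_self _).trans (Finset.abs_sum_le_sum_abs _ _)
    _ ≤ ∑ j, C * |b j| := Finset.sum_le_sum fun j _ => by
        rw [abs_mul, mul_comm]
        exact mul_le_mul_of_nonneg_right (hv j) (abs_nonneg _)
    _ = C * ∑ j, |b j| := (Finset.mul_sum _ _ _).symm

lemma dotProduct_mulVec_self_nonneg {S : Matrix ι ι ℝ} (hS : S.PosSemidef) (b : ι → ℝ) :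
    0 ≤ b ⬝ᵥ S *ᵥ b := by
  simpa using hS.dotProduct_mulVec_nonneg b

def quadRisk (τsq : ℝ) (ρ : ι → ℝ) (S : Matrix ι ι ℝ) (b : ι → ℝ) : ℝ :=
  τsq + b ⬝ᵥ S *ᵥ b - 2 * (b ⬝ᵥ ρ)

noncomputable def constrainedMinRisk (τsq : ℝ) (ρ : ι → ℝ) (S : Matrix ι ι ℝ) (ℓ : ℝ) : ℝ :=
  sInf (quadRisk τsq ρ S '' l1Ball ℓ)

lemma csInf_image_le_csInf_image_add {α : Type*} {f : α → ℝ} {s t : Set α} {ε : ℝ}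
    (ht : t.Nonempty) (hs : BddBelow (f '' s)) (hst : ∀ b ∈ t, ∃ a ∈ s, f a ≤ f b + ε) :
    sInf (f '' s) ≤ sInf (f '' t) + ε := by
  rw [← sub_le_iff_le_add]
  refine le_csInf (ht.image f) ?_
  rintro _ ⟨b, hb, rfl⟩
  obtain ⟨a, ha, hab⟩ := hst b hb
  have := csInf_le hs (Set.mem_image_of_mem f ha)
  linarith

section QuadRisk

variable {τsq : ℝ} {ρ : ι → ℝ} {S : Matrix ι ι ℝ}

lemma quadRisk_smul (t : ℝ) (b : ι → ℝ) :
    quadRisk τsq ρ S (t • b) =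
      quadRisk τsq ρ S b - (1 - t ^ 2) * (b ⬝ᵥ S *ᵥ b) + 2 * (1 - t) * (b ⬝ᵥ ρ) := by
  simp only [quadRisk, mulVec_smul, smul_dotProduct, dotProduct_smul, smul_eq_mul]
  ring

lemma quadRisk_smul_le (hS : S.PosSemidef) {t C : ℝ} (ht0 : 0 ≤ t) (ht1 : t ≤ 1)
    (hρ : ∀ j, |ρ j| ≤ C) (b : ι → ℝ) :
    quadRisk τsq ρ S (t • b) ≤ quadRisk τsq ρ S b + 2 * (1 - t) * (C * ∑ j, |b j|) := by
  have hquad : 0 ≤ (1 - t ^ 2) * (b ⬝ᵥ S *ᵥ b) :=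
    mul_nonneg (by nlinarith) (dotProduct_mulVec_self_nonneg hS b)
  have hlin : 2 * (1 - t) * (b ⬝ᵥ ρ) ≤ 2 * (1 - t) * (C * ∑ j, |b j|) :=
    mul_le_mul_of_nonneg_left (dotProduct_le_mul_sum_abs hρ) (by linarith)
  rw [quadRisk_smul]
  linarith

lemma bddBelow_quadRisk_image_l1Ball (hS : S.PosSemidef) (r : ℝ) :
    BddBelow (quadRisk τsq ρ S '' l1Ball r) := by
  set C := ∑ j, |ρ j|
  have hρ : ∀ j, |ρ j| ≤ C := fun j =>
    Finset.single_le_sum (fun j _ => abs_nonneg (ρ j)) (Finset.mem_univ j)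
  have hC : 0 ≤ C := Finset.sum_nonneg fun j _ => abs_nonneg (ρ j)
  refine ⟨τsq - 2 * (C * r), ?_⟩
  rintro _ ⟨b, hb, rfl⟩
  have hlin : b ⬝ᵥ ρ ≤ C * r :=
    (dotProduct_le_mul_sum_abs hρ).trans (mul_le_mul_of_nonneg_left hb hC)
  have := dotProduct_mulVec_self_nonneg hS b
  unfold quadRisk
  linarith

lemma constrainedMinRisk_antitoneOn (hS : S.PosSemidef) :
    AntitoneOn (constrainedMinRisk τsq ρ S) (Set.Ici 0) :=
  fun _ hℓ _ _ hℓℓ' => csInf_le_csInf (bddBelow_quadRisk_image_l1Ball hS _)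
    ⟨_, Set.mem_image_of_mem _ (zero_mem_l1Ball hℓ)⟩ (Set.image_mono (l1Ball_mono hℓℓ'))

lemma constrainedMinRisk_le_add (hS : S.PosSemidef) {C : ℝ} (hC : 0 ≤ C) (hρ : ∀ j, |ρ j| ≤ C)
    {ℓ δ : ℝ} (hℓ : 0 ≤ ℓ) (hδ : 0 < δ) :
    constrainedMinRisk τsq ρ S ℓ ≤ constrainedMinRisk τsq ρ S (ℓ + δ) + 2 * δ * C := by
  have hℓδ : 0 < ℓ + δ := by linarith
  set t := ℓ / (ℓ + δ)
  have ht0 : 0 ≤ t := div_nonneg hℓ hℓδ.le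
  have ht1 : t ≤ 1 := (div_le_one hℓδ).2 (by linarith)
  have hshrink : (1 - t) * (ℓ + δ) = δ := by
    simp only [t]
    field_simp
    ring
  refine csInf_image_le_csInf_image_add ⟨0, zero_mem_l1Ball hℓδ.le⟩
    (bddBelow_quadRisk_image_l1Ball hS ℓ) fun b hb => ⟨t • b, ?_, ?_⟩
  · simpa [t, div_mul_cancel₀ ℓ hℓδ.ne'] using smul_mem_l1Ball ht0 hb
  · calc quadRisk τsq ρ S (t • b)
          ≤ quadRisk τsq ρ S b + 2 * (1 - t) * (C * ∑ j, |b j|) :=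
            quadRisk_smul_le hS ht0 ht1 hρ b
      _ ≤ quadRisk τsq ρ S b + 2 * (1 - t) * (C * (ℓ + δ)) := by
            gcongr
            exact hb
      _ = quadRisk τsq ρ S b + 2 * δ * C := by linear_combination 2 * C * hshrink

end QuadRisk

theorem stmt8_general (p : ℕ) (hp : 0 < p) (τsq : ℝ) (ρ : Fin p → ℝ)
    (S : Matrix (Fin p) (Fin p) ℝ) (hS : S.PosSemidef)
    (Ω : ℝ)
    (R : (Fin p → ℝ) → ℝ)
    (hR : ∀ b, R b = τsq + b ⬝ᵥ S.mulVec b - 2 * (b ⬝ᵥ ρ))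
    (h : ℝ → ℝ)
    (hh : ∀ ℓ, h ℓ = sInf (R '' {b | ∑ j, |b j| ≤ ℓ}))
    (C : ℝ)
    (hC : C = max
      (Finset.univ.sup' (Finset.univ_nonempty_iff.mpr (Fin.pos_iff_nonempty.mp hp))
        fun j => |ρ j|)
      (Finset.univ.sup' (Finset.univ_nonempty_iff.mpr ⟨(⟨0, hp⟩, ⟨0, hp⟩)⟩)
        fun jk : Fin p × Fin p => |S jk.1 jk.2|)) :
    ∀ ℓ δ : ℝ, 0 ≤ ℓ → 0 < δ → ℓ + δ ≤ Ω →
      0 ≤ h ℓ - h (ℓ + δ) ∧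
      h ℓ - h (ℓ + δ) ≤ 2 * δ * C + δ * (2 * Ω + δ) * C * Ω ^ 2 := by
  intro ℓ δ hℓ hδ hℓδΩ
  obtain rfl : R = quadRisk τsq ρ S := funext hR
  obtain rfl : h = constrainedMinRisk τsq ρ S := funext hh
  have hρ : ∀ j, |ρ j| ≤ C := fun j =>
    hC ▸ le_max_of_le_left (Finset.le_sup' (fun j => |ρ j|) (Finset.mem_univ j))
  have hC0 : 0 ≤ C := (abs_nonneg _).trans (hρ ⟨0, hp⟩)
  have hmono : constrainedMinRisk τsq ρ S (ℓ + δ) ≤ constrainedMinRisk τsq ρ S ℓ :=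
    constrainedMinRisk_antitoneOn hS (Set.mem_Ici.2 hℓ) (Set.mem_Ici.2 (by linarith))
      (le_add_of_nonneg_right hδ.le)
  have hlip := constrainedMinRisk_le_add (τsq := τsq) hS hC0 hρ hℓ hδ
  have hslack : 0 ≤ δ * (2 * Ω + δ) * C * Ω ^ 2 :=
    mul_nonneg (mul_nonneg (mul_nonneg hδ.le (by linarith)) hC0) (sq_nonneg Ω)
  constructor <;> linarith

/-- Let `R(b) = τ² + bᵀΣb − 2bᵀρ` with `Σ` positive semidefinite,
`h(ℓ) = inf_{‖b‖₁ ≤ ℓ} R(b)` and `C = max{max_j |ρ_j|, max_{j,k} |Σ_{jk}|}`. Then for all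
`0 ≤ ℓ` and `δ > 0` with `ℓ + δ ≤ Ω`,
`0 ≤ h(ℓ) − h(ℓ+δ) ≤ 2δC + δ(2Ω + δ)CΩ²`. -/
theorem stmt8 (p : ℕ) (hp : 0 < p) (τsq : ℝ) (ρ : Fin p → ℝ)
    (S : Matrix (Fin p) (Fin p) ℝ) (hS : S.PosSemidef)
    (Ω : ℝ) (hΩ : 0 < Ω)
    (R : (Fin p → ℝ) → ℝ)
    (hR : ∀ b, R b = τsq + b ⬝ᵥ S.mulVec b - 2 * (b ⬝ᵥ ρ))
    (h : ℝ → ℝ)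
    (hh : ∀ ℓ, h ℓ = sInf (R '' {b | ∑ j, |b j| ≤ ℓ}))
    (C : ℝ)
    (hC : C = max
      (Finset.univ.sup' (Finset.univ_nonempty_iff.mpr (Fin.pos_iff_nonempty.mp hp))
        fun j => |ρ j|)
      (Finset.univ.sup' (Finset.univ_nonempty_iff.mpr ⟨(⟨0, hp⟩, ⟨0, hp⟩)⟩)
        fun jk : Fin p × Fin p => |S jk.1 jk.2|)) :
    ∀ ℓ δ : ℝ, 0 ≤ ℓ → 0 < δ → ℓ + δ ≤ Ω →
      0 ≤ h ℓ - h (ℓ + δ) ∧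
      h ℓ - h (ℓ + δ) ≤ 2 * δ * C + δ * (2 * Ω + δ) * C * Ω ^ 2 :=
  stmt8_general p hp τsq ρ S hS Ω R hR h hh C hC
end
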